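/- For every s ∈ ℂ with (M·s² + D·s + 3B)·(M·s + D) ≠ 0, the matrix s·I₅ − A is invertible and every diagonal entry of the transfer matrix H(s) = C·(s·I₅ − A)⁻¹·B_in satisfies H(s)_{ii} = (M·s² + D·s + B)/((M·s² + D·s + 3B)·(M·s + D)) for i = 1, 2, 3. -/

import Mathlib

open Matrix

noncomputable section

/-- The complexified 5×5 state matrix of three identical multi-loop droop GFMs in a
triangle network: A = [[0, A₁₂],[A₂₁, −(D/M)·I₃]] with A₁₂ = [[1,0,−1],[0,1,−1]] and
A₂₁ = (B/M)·[[−2,1],[1,−2],[1,1]]. -/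
def A3 (M D B : ℝ) : Matrix (Fin 5) (Fin 5) ℂ :=
  !![0, 0, 1, 0, -1;
     0, 0, 0, 1, -1;
     -2 * B / M, B / M, -D / M, 0, 0;
     B / M, -2 * B / M, 0, -D / M, 0;
     B / M, B / M, 0, 0, -D / M]

/-- The 5×3 input matrix B_in = [0_{2×3}; (1/M)·I₃]. -/
def Bin3 (M : ℝ) : Matrix (Fin 5) (Fin 3) ℂ :=
  !![0, 0, 0;
     0, 0, 0;
     1 / M, 0, 0;
     0, 1 / M, 0;
     0, 0, 1 / M]

/-- The 3×5 output matrix C = [0_{3×2} | I₃], selecting the three frequencies. -/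
def Cout : Matrix (Fin 3) (Fin 5) ℂ :=
  !![0, 0, 1, 0, 0;
     0, 0, 0, 1, 0;
     0, 0, 0, 0, 1]

/-- The transfer matrix H(s) = C·(s·I₅ − A)⁻¹·B_in from bus power disturbances to
GFM frequency deviations. -/
def H (M D B : ℝ) (s : ℂ) : Matrix (Fin 3) (Fin 3) ℂ :=
  Cout * (s • (1 : Matrix (Fin 5) (Fin 5) ℂ) - A3 M D B)⁻¹ * Bin3 M

/-- Explicit inverse of s•I₅ − A. -/
def N3 (M D B : ℝ) (s : ℂ) : Matrix (Fin 5) (Fin 5) ℂ :=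
  !![(M * s + D) / (M * s ^ 2 + D * s + 3 * B), 0,
       M / (M * s ^ 2 + D * s + 3 * B), 0, -(M / (M * s ^ 2 + D * s + 3 * B));
     0, (M * s + D) / (M * s ^ 2 + D * s + 3 * B), 0,
       M / (M * s ^ 2 + D * s + 3 * B), -(M / (M * s ^ 2 + D * s + 3 * B));
     -(2 * B / (M * s ^ 2 + D * s + 3 * B)), B / (M * s ^ 2 + D * s + 3 * B),
       M * (s * (M * s + D) + B) / ((M * s + D) * (M * s ^ 2 + D * s + 3 * B)),
       M * B / ((M * s + D) * (M * s ^ 2 + D * s + 3 * B)),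
       M * B / ((M * s + D) * (M * s ^ 2 + D * s + 3 * B));
     B / (M * s ^ 2 + D * s + 3 * B), -(2 * B / (M * s ^ 2 + D * s + 3 * B)),
       M * B / ((M * s + D) * (M * s ^ 2 + D * s + 3 * B)),
       M * (s * (M * s + D) + B) / ((M * s + D) * (M * s ^ 2 + D * s + 3 * B)),
       M * B / ((M * s + D) * (M * s ^ 2 + D * s + 3 * B));
     B / (M * s ^ 2 + D * s + 3 * B), B / (M * s ^ 2 + D * s + 3 * B),
       M * B / ((M * s + D) * (M * s ^ 2 + D * s + 3 * B)),
       M * B / ((M * s + D) * (M * s ^ 2 + D * s + 3 * B)),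
       M * (s * (M * s + D) + B) / ((M * s + D) * (M * s ^ 2 + D * s + 3 * B))]

set_option maxHeartbeats 2000000 in
/-- For every s with (M·s² + D·s + 3B)·(M·s + D) ≠ 0, the matrix s·I₅ − A is
invertible and every diagonal entry of H(s) equals
(M·s² + D·s + B)/((M·s² + D·s + 3B)·(M·s + D)). -/
theorem H_diagonal (M D B : ℝ) (hM : 0 < M) (hD : 0 < D) (hB : 0 < B) (s : ℂ)
    (hs : ((M : ℂ) * s ^ 2 + D * s + 3 * B) * ((M : ℂ) * s + D) ≠ 0) :
    IsUnit (s • (1 : Matrix (Fin 5) (Fin 5) ℂ) - A3 M D B) ∧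
      ∀ i : Fin 3, H M D B s i i =
        ((M : ℂ) * s ^ 2 + D * s + B) /
          (((M : ℂ) * s ^ 2 + D * s + 3 * B) * ((M : ℂ) * s + D)) := by
  have hp : (M : ℂ) * s ^ 2 + D * s + 3 * B ≠ 0 := fun h => hs (by rw [h]; ring)
  have hd : (M : ℂ) * s + D ≠ 0 := fun h => hs (by rw [h]; ring)
  have hM' : (M : ℂ) ≠ 0 := by exact_mod_cast hM.ne'
  have hmul : (s • (1 : Matrix (Fin 5) (Fin 5) ℂ) - A3 M D B) * N3 M D B s = 1 := by
    ext i j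
    fin_cases i <;> fin_cases j <;>
      simp [A3, N3, Matrix.mul_apply, Fin.sum_univ_five, Matrix.one_apply,
        Matrix.vecHead, Matrix.vecTail] <;>
      grind
  refine ⟨(Matrix.isUnit_iff_isUnit_det _).mpr (Matrix.isUnit_det_of_right_inverse hmul), fun i => ?_⟩
  have hinv := Matrix.inv_eq_right_inv hmul
  fin_cases i <;>
    simp [H, hinv, Cout, Bin3, N3, Matrix.mul_apply, Fin.sum_univ_five, Fin.sum_univ_three,
      Matrix.vecHead, Matrix.vecTail] <;>
    field_simp <;> ring
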